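/- arXiv:2011.11862 — 2 statements merged into one kernel-verified Lean document; each statement's English description precedes it below -/
import Mathlib

section
/- Let (S_n) be a simple random walk on ℤ². Then for every pair of vectors u, v ∈ ℤ² and every n ≥ 1, the probability that S_n lies in the set {v + k·u : k ∈ ℤ} ∪ {−v + k·u : k ∈ ℤ} is at most 10/√n. -/
/-!
Rotating coordinates by `(x, y) ↦ (x + y, x - y)` turns a step of the walk into a pair of
independent fair signs, so `S_n` becomes a pair `(X_n, Y_n)` of independent one-dimensional
simple random walks. The set `{±v + k u}` lies on the two lines `L = ±L(v)` for a nonzero linear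
form `L` with `L(u) = 0`, and in rotated coordinates `2L = a X + b Y` with `(a, b) ≠ 0`. If, say,
`a ≠ 0`, then each value of `Y_n` fixes `X_n` on a given line, so `S_n` lies on that line with
probability at most `max_t P(X_n = t) = C(n, ⌊n/2⌋) / 2^n ≤ 1 / √n`.
-/

open MeasureTheory ProbabilityTheory Finset
open scoped ENNReal

lemma Nat.centralBinom_sq_mul_le (m : ℕ) : m.centralBinom ^ 2 * (2 * m + 1) ≤ 16 ^ m := by
  induction m with
  | zero => simp
  | succ m ih =>
    have hquad : (2 * m + 1) * (2 * m + 3) ≤ 4 * (m + 1) ^ 2 := by nlinarith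
    refine Nat.le_of_mul_le_mul_right (c := (m + 1) ^ 2) ?_ (by positivity)
    calc (m + 1).centralBinom ^ 2 * (2 * (m + 1) + 1) * (m + 1) ^ 2
        = ((m + 1) * (m + 1).centralBinom) ^ 2 * (2 * m + 3) := by ring
      _ = 4 * (m.centralBinom ^ 2 * (2 * m + 1)) * ((2 * m + 1) * (2 * m + 3)) := by
          rw [Nat.succ_mul_centralBinom_succ]; ring
      _ ≤ 4 * 16 ^ m * (4 * (m + 1) ^ 2) := by gcongr
      _ = 16 ^ (m + 1) * (m + 1) ^ 2 := by ring

lemma Nat.choose_half_sq_mul_le (n : ℕ) : n.choose (n / 2) ^ 2 * n ≤ 4 ^ n := by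
  obtain ⟨m, rfl | rfl⟩ := Nat.even_or_odd' n
  · calc (2 * m).choose (2 * m / 2) ^ 2 * (2 * m)
        ≤ m.centralBinom ^ 2 * (2 * m + 1) := by
          rw [Nat.mul_div_cancel_left m two_pos, ← Nat.centralBinom_eq_two_mul_choose]
          gcongr; omega
      _ ≤ 16 ^ m := m.centralBinom_sq_mul_le
      _ = 4 ^ (2 * m) := by rw [pow_mul]; norm_num
  · have hhalf : (2 * m + 1) / 2 = m := by omega
    -- `C(2m+1, m) (m+1) = C(2m, m) (2m+1) ≤ 2 C(2m, m) (m+1)`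
    have hodd : (2 * m + 1).choose m ≤ 2 * m.centralBinom := by
      refine Nat.le_of_mul_le_mul_right (c := m + 1) ?_ m.succ_pos
      have := Nat.choose_mul_succ_eq (2 * m) m
      rw [← Nat.centralBinom_eq_two_mul_choose, show 2 * m + 1 - m = m + 1 by omega] at this
      rw [← this]; nlinarith
    calc (2 * m + 1).choose ((2 * m + 1) / 2) ^ 2 * (2 * m + 1)
        ≤ (2 * m.centralBinom) ^ 2 * (2 * m + 1) := by rw [hhalf]; gcongr
      _ = 4 * (m.centralBinom ^ 2 * (2 * m + 1)) := by ring
      _ ≤ 4 * 16 ^ m := by gcongr; exact m.centralBinom_sq_mul_le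
      _ = 4 ^ (2 * m + 1) := by rw [pow_succ, pow_mul]; norm_num; ring

lemma Nat.choose_half_mul_sqrt_le (n : ℕ) : (n.choose (n / 2) : ℝ) * √n ≤ 2 ^ n := by
  refine (pow_le_pow_iff_left₀ (by positivity) (by positivity) two_ne_zero).1 ?_
  rw [mul_pow, Real.sq_sqrt n.cast_nonneg, ← pow_mul, mul_comm n, pow_mul]
  exact_mod_cast n.choose_half_sq_mul_le

section Counting

variable {ι : Type*} [Fintype ι] [DecidableEq ι]

variable (ι) in
def signVectors : Finset (ι → ℤ) :=
  Fintype.piFinset fun _ ↦ {1, -1}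

lemma card_signVectors : #(signVectors ι) = 2 ^ Fintype.card ι := by
  simp [signVectors, Fintype.card_piFinset]

lemma mem_signVectors {ε : ι → ℤ} : ε ∈ signVectors ι ↔ ∀ i, ε i = 1 ∨ ε i = -1 := by
  simp [signVectors]

lemma sum_eq_two_mul_card_sub_of_mem_signVectors {ε : ι → ℤ} (hε : ε ∈ signVectors ι) :
    ∑ i, ε i = 2 * #{i | ε i = 1} - Fintype.card ι := by
  have hcoord : ∀ i, ε i = 2 * (if ε i = 1 then 1 else 0) - 1 := fun i ↦ by
    rcases mem_signVectors.1 hε i with h | h <;> simp [h]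
  rw [sum_congr rfl fun i _ ↦ hcoord i, sum_sub_distrib, ← mul_sum, sum_boole]
  simp

lemma card_filter_signVectors_sum_eq_le (t : ℤ) :
    #{ε ∈ signVectors ι | ∑ i, ε i = t} ≤ (Fintype.card ι).choose (Fintype.card ι / 2) := by
  set r := ((t + Fintype.card ι) / 2).toNat
  calc #{ε ∈ signVectors ι | ∑ i, ε i = t}
      ≤ #(powersetCard r (univ : Finset ι)) := by
        refine card_le_card_of_injOn (fun ε ↦ ({i | ε i = 1} : Finset ι)) ?_ ?_
        · intro ε hε
          obtain ⟨hmem, hsum⟩ := mem_filter.1 hε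
          have := sum_eq_two_mul_card_sub_of_mem_signVectors hmem
          simp only [SetLike.mem_coe, mem_powersetCard, subset_univ, true_and]
          omega
        · intro ε hε ε' hε' hεε'
          funext i
          have hiff : ε i = 1 ↔ ε' i = 1 := by simpa using congrArg (i ∈ ·) hεε'
          rcases mem_signVectors.1 (mem_filter.1 hε).1 i with h | h <;>
            rcases mem_signVectors.1 (mem_filter.1 hε').1 i with h' | h' <;> simp_all
    _ = (Fintype.card ι).choose r := by simp
    _ ≤ (Fintype.card ι).choose (Fintype.card ι / 2) := Nat.choose_le_middle r _

lemma card_filter_signVectors_mul_sum_eq_le {a : ℤ} (ha : a ≠ 0) (d : ℤ) :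
    #{ε ∈ signVectors ι | a * ∑ i, ε i = d} ≤ (Fintype.card ι).choose (Fintype.card ι / 2) :=
  (card_le_card (monotone_filter_right _ fun _ _ ↦ Int.eq_ediv_of_mul_eq_right ha)).trans
    (card_filter_signVectors_sum_eq_le (d / a))

lemma card_filter_signVectors_product_le {a b : ℤ} (hab : a ≠ 0 ∨ b ≠ 0) (d : ℤ) :
    #{x ∈ signVectors ι ×ˢ signVectors ι | a * ∑ i, x.1 i + b * ∑ i, x.2 i = d} ≤
      2 ^ Fintype.card ι * (Fintype.card ι).choose (Fintype.card ι / 2) := by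
  rw [card_filter, ← card_signVectors, ← smul_eq_mul, ← sum_const]
  rcases hab with ha | hb
  · rw [sum_product_right]
    refine sum_le_sum fun δ _ ↦ ?_
    rw [← card_filter]
    simpa only [eq_sub_iff_add_eq] using
      card_filter_signVectors_mul_sum_eq_le ha (d - b * ∑ i, δ i)
  · rw [sum_product]
    refine sum_le_sum fun ε _ ↦ ?_
    rw [← card_filter]
    simpa only [eq_sub_iff_add_eq'] using
      card_filter_signVectors_mul_sum_eq_le hb (d - a * ∑ i, ε i)

def walkSteps : Finset (ℤ × ℤ) := {(1, 0), (-1, 0), (0, 1), (0, -1)}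

lemma card_filter_walkSteps_linear_sum_eq_le {p q : ℤ} (hpq : p ≠ 0 ∨ q ≠ 0) (c : ℤ) :
    #{f ∈ Fintype.piFinset (fun _ : ι ↦ walkSteps) | p * (∑ i, f i).1 + q * (∑ i, f i).2 = c} ≤
      2 ^ Fintype.card ι * (Fintype.card ι).choose (Fintype.card ι / 2) := by
  let rotate (f : ι → ℤ × ℤ) : (ι → ℤ) × (ι → ℤ) :=
    (fun i ↦ (f i).1 + (f i).2, fun i ↦ (f i).1 - (f i).2)
  calc _ ≤ #{x ∈ signVectors ι ×ˢ signVectors ι |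
          (p + q) * ∑ i, x.1 i + (p - q) * ∑ i, x.2 i = 2 * c} := by
        refine card_le_card_of_injOn rotate ?_ ?_
        · intro f hf
          obtain ⟨hsteps, hc⟩ := mem_filter.1 hf
          simp only [coe_filter, mem_product, mem_signVectors]
          have hstep : ∀ i, f i = (1, 0) ∨ f i = (-1, 0) ∨ f i = (0, 1) ∨ f i = (0, -1) := by
            simpa [walkSteps] using Fintype.mem_piFinset.1 hsteps
          refine ⟨⟨fun i ↦ ?_, fun i ↦ ?_⟩, ?_⟩
          · rcases hstep i with h | h | h | h <;> simp [rotate, h]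
          · rcases hstep i with h | h | h | h <;> simp [rotate, h]
          · simp only [rotate, sum_add_distrib, sum_sub_distrib, ← Prod.fst_sum, ← Prod.snd_sum]
            linear_combination 2 * hc
        · intro f _ g _ hfg
          funext i
          have h1 := congrFun (congrArg Prod.fst hfg) i
          have h2 := congrFun (congrArg Prod.snd hfg) i
          simp only [rotate] at h1 h2
          ext <;> omega
    _ ≤ _ := card_filter_signVectors_product_le (by omega) (2 * c)

lemma card_filter_walkSteps_linear_sum_eq_or_eq_le {p q : ℤ} (hpq : p ≠ 0 ∨ q ≠ 0) (c₁ c₂ : ℤ) :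
    #{f ∈ Fintype.piFinset (fun _ : ι ↦ walkSteps) |
        p * (∑ i, f i).1 + q * (∑ i, f i).2 = c₁ ∨ p * (∑ i, f i).1 + q * (∑ i, f i).2 = c₂} ≤
      2 * (2 ^ Fintype.card ι * (Fintype.card ι).choose (Fintype.card ι / 2)) := by
  rw [filter_or, two_mul]
  exact (card_union_le _ _).trans (add_le_add (card_filter_walkSteps_linear_sum_eq_le hpq c₁)
    (card_filter_walkSteps_linear_sum_eq_le hpq c₂))

end Counting

lemma ae_mem_of_sum_measure_eq_one {Ω α : Type*} [MeasurableSpace Ω] {μ : Measure Ω}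
    [IsProbabilityMeasure μ] [MeasurableSpace α] [MeasurableSingletonClass α] {X : Ω → α}
    (hX : Measurable X) {D : Finset α} (h : ∑ s ∈ D, μ {ω | X ω = s} = 1) :
    ∀ᵐ ω ∂μ, X ω ∈ D := by
  have hmem : μ (X ⁻¹' D) = 1 := by
    rw [← h]
    exact (sum_measure_preimage_singleton D fun s _ ↦ hX (measurableSet_singleton s)).symm
  exact (ae_iff_measure_eq (hX D.measurableSet).nullMeasurableSet).2
    (hmem.trans measure_univ.symm)

lemma measure_le_card_filter_mul_pow {Ω α ι : Type*} [MeasurableSpace Ω] {μ : Measure Ω}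
    [MeasurableSpace α] [MeasurableSingletonClass α] [Fintype ι] [DecidableEq ι]
    {ξ : ι → Ω → α} (hindep : iIndepFun ξ μ) {D : Finset α} (hD : ∀ i, ∀ᵐ ω ∂μ, ξ i ω ∈ D)
    {p : ℝ≥0∞} (hp : ∀ i, ∀ s ∈ D, μ {ω | ξ i ω = s} ≤ p) (P : (ι → α) → Prop)
    [DecidablePred P] :
    μ {ω | P fun i ↦ ξ i ω} ≤ #{f ∈ Fintype.piFinset fun _ : ι ↦ D | P f} * p ^ Fintype.card ι := by
  set T := {f ∈ Fintype.piFinset fun _ : ι ↦ D | P f}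
  have hcover : {ω | P fun i ↦ ξ i ω} ≤ᵐ[μ] ⋃ f ∈ T, ⋂ i, {ω | ξ i ω = f i} := by
    filter_upwards [ae_all_iff.2 hD] with ω hω hP
    exact Set.mem_biUnion (x := fun i ↦ ξ i ω) (mem_filter.2 ⟨Fintype.mem_piFinset.2 hω, hP⟩)
      (by simp)
  calc μ {ω | P fun i ↦ ξ i ω}
      ≤ ∑ f ∈ T, μ (⋂ i, {ω | ξ i ω = f i}) :=
        (measure_mono_ae hcover).trans (measure_biUnion_finset_le _ _)
    _ = ∑ f ∈ T, ∏ i, μ {ω | ξ i ω = f i} :=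
        sum_congr rfl fun f _ ↦
          hindep.meas_iInter fun i ↦ ⟨{f i}, measurableSet_singleton _, rfl⟩
    _ ≤ ∑ _f ∈ T, p ^ Fintype.card ι := by
        refine sum_le_sum fun f hf ↦ prod_le_pow_card _ _ _ fun i _ ↦ hp i (f i) ?_
        exact Fintype.mem_piFinset.1 (mem_filter.1 hf).1 i
    _ = #T * p ^ Fintype.card ι := by rw [sum_const, nsmul_eq_mul]

lemma two_pow_mul_choose_half_mul_inv_four_pow_le {n : ℕ} (hn : n ≠ 0) :
    ((2 ^ n * n.choose (n / 2) : ℕ) : ℝ≥0∞) * 4⁻¹ ^ n ≤ ENNReal.ofReal (√n)⁻¹ := by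
  have hfour : (4⁻¹ : ℝ≥0∞) ^ n = ENNReal.ofReal ((2 ^ n)⁻¹ * (2 ^ n)⁻¹) := by
    rw [← mul_inv, ← mul_pow, ENNReal.ofReal_inv_of_pos (by positivity),
      ENNReal.ofReal_pow (by norm_num), ENNReal.inv_pow]
    norm_num
  rw [hfour, ← ENNReal.ofReal_natCast, ← ENNReal.ofReal_mul (by positivity)]
  refine ENNReal.ofReal_le_ofReal ?_
  calc ((2 ^ n * n.choose (n / 2) : ℕ) : ℝ) * ((2 ^ n)⁻¹ * (2 ^ n)⁻¹)
      = n.choose (n / 2) / 2 ^ n := by push_cast; field_simp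
    _ ≤ (√n)⁻¹ := by
      rw [div_le_iff₀ (by positivity), inv_mul_eq_div, le_div_iff₀ (by positivity)]
      exact n.choose_half_mul_sqrt_le

lemma ae_mem_walkSteps {Ω : Type*} [MeasurableSpace Ω] {μ : Measure Ω} [IsProbabilityMeasure μ]
    {X : Ω → ℤ × ℤ} (hX : Measurable X) (h : ∀ s ∈ walkSteps, μ {ω | X ω = s} = 4⁻¹) :
    ∀ᵐ ω ∂μ, X ω ∈ walkSteps := by
  refine ae_mem_of_sum_measure_eq_one hX ?_
  rw [sum_congr rfl h]
  simp [walkSteps, ENNReal.mul_inv_cancel]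

lemma exists_mul_add_mul_eq_zero (u : ℤ × ℤ) :
    ∃ p q : ℤ, (p ≠ 0 ∨ q ≠ 0) ∧ p * u.1 + q * u.2 = 0 := by
  by_cases h : u.1 = 0
  · exact ⟨1, 0, by simp, by simp [h]⟩
  · exact ⟨u.2, -u.1, Or.inr (neg_ne_zero.2 h), by ring⟩

lemma mul_add_mul_eq_or_eq_neg_of_mem_coset {p q k : ℤ} {u v s : ℤ × ℤ}
    (hu : p * u.1 + q * u.2 = 0) (hs : s = v + k • u ∨ s = -v + k • u) :
    p * s.1 + q * s.2 = p * v.1 + q * v.2 ∨ p * s.1 + q * s.2 = -(p * v.1 + q * v.2) := by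
  rcases hs with rfl | rfl <;>
    simp only [Prod.fst_add, Prod.snd_add, Prod.fst_neg, Prod.snd_neg, Prod.smul_fst,
      Prod.smul_snd, smul_eq_mul]
  · left; linear_combination k * hu
  · right; linear_combination k * hu

/-- **Statement 17.** Let `S_n = ξ₁ + ⋯ + ξ_n` be a simple random walk on `ℤ²` (the
steps `ξ_i` are independent and uniform on `{(1,0), (-1,0), (0,1), (0,-1)}`).  Then for
all `u, v ∈ ℤ²` and all `n ≥ 1`, the probability that `S_n ∈ {±v + k·u : k ∈ ℤ}` is at
most `10 / √n`. -/
theorem walk_in_coset_prob_le {Ω : Type*} [MeasurableSpace Ω] (μ : Measure Ω)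
    [IsProbabilityMeasure μ] (ξ : ℕ → Ω → ℤ × ℤ) (hmeas : ∀ i, Measurable (ξ i))
    (hindep : iIndepFun ξ μ)
    (hdist : ∀ i, ∀ s ∈ ({(1, 0), (-1, 0), (0, 1), (0, -1)} : Set (ℤ × ℤ)),
      μ {ω | ξ i ω = s} = 1 / 4)
    (u v : ℤ × ℤ) (n : ℕ) (hn : 1 ≤ n) :
    μ {ω | ∃ k : ℤ, (∑ i ∈ Finset.range n, ξ i ω) = v + k • u ∨
        (∑ i ∈ Finset.range n, ξ i ω) = -v + k • u} ≤
      ENNReal.ofReal (10 / Real.sqrt n) := by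
  classical
  have hstep : ∀ i, ∀ s ∈ walkSteps, μ {ω | ξ i ω = s} = 4⁻¹ :=
    fun i s hs ↦ by simpa using hdist i s (by simpa [walkSteps] using hs)
  obtain ⟨p, q, hpq, hu⟩ := exists_mul_add_mul_eq_zero u
  set c := p * v.1 + q * v.2
  let onLines (f : Fin n → ℤ × ℤ) : Prop :=
    p * (∑ i, f i).1 + q * (∑ i, f i).2 = c ∨ p * (∑ i, f i).1 + q * (∑ i, f i).2 = -c
  have hcount : #{f ∈ Fintype.piFinset fun _ : Fin n ↦ walkSteps | onLines f} ≤
      2 * (2 ^ n * n.choose (n / 2)) := by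
    simpa using card_filter_walkSteps_linear_sum_eq_or_eq_le (ι := Fin n) hpq c (-c)
  calc _ ≤ μ {ω | onLines fun i ↦ ξ i ω} := by
        refine measure_mono fun ω ⟨k, hk⟩ ↦ ?_
        rw [sum_range] at hk
        exact mul_add_mul_eq_or_eq_neg_of_mem_coset hu hk
    _ ≤ #{f ∈ Fintype.piFinset fun _ : Fin n ↦ walkSteps | onLines f} * 4⁻¹ ^ n := by
        simpa using measure_le_card_filter_mul_pow (ξ := fun i : Fin n ↦ ξ i)
          (hindep.precomp Fin.val_injective) (fun i ↦ ae_mem_walkSteps (hmeas i) (hstep i))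
          (fun i s hs ↦ (hstep i s hs).le) onLines
    _ ≤ 2 * (((2 ^ n * n.choose (n / 2) : ℕ) : ℝ≥0∞) * 4⁻¹ ^ n) := by
        rw [← mul_assoc]; gcongr; exact_mod_cast hcount
    _ ≤ 2 * ENNReal.ofReal (√n)⁻¹ := by
        gcongr; exact two_pow_mul_choose_half_mul_inv_four_pow_le (by omega)
    _ ≤ ENNReal.ofReal (10 / √n) := by
        rw [← ENNReal.ofReal_ofNat, ← ENNReal.ofReal_mul (by norm_num), div_eq_mul_inv]
        gcongr; norm_num
end

section
/- Let (S_n) and (T_n) be two independent simple random walks on ℤ². Then the probability that the pair {S_n, T_n} generates ℤ² tends to 0 as n → ∞. -/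
open MeasureTheory ProbabilityTheory Filter

set_option linter.unusedSectionVars false
set_option linter.unusedVariables false
set_option maxHeartbeats 1000000 in
section
section Conv

variable {G : Type*} [AddCommGroup G] [Fintype G] [DecidableEq G]

/-- convolution of two functions on a finite group -/
noncomputable def myconv (f g : G → ℝ) : G → ℝ := fun a => ∑ b, f b * g (a - b)

/-- delta at 0 -/
noncomputable def mydelta : G → ℝ := fun a => if a = 0 then 1 else 0

noncomputable def convPow (f : G → ℝ) : ℕ → G → ℝ
  | 0 => mydelta
  | n + 1 => myconv f (convPow f n)

lemma myconv_nonneg {f g : G → ℝ} (hf : ∀ a, 0 ≤ f a) (hg : ∀ a, 0 ≤ g a) :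
    ∀ a, 0 ≤ myconv f g a := fun a =>
  Finset.sum_nonneg fun b _ => mul_nonneg (hf b) (hg _)

lemma sum_shift (g : G → ℝ) (a : G) : ∑ b, g (a - b) = ∑ b, g b := by
  exact Fintype.sum_equiv (Equiv.subLeft a) _ _ (fun b => rfl)

lemma sum_myconv {f g : G → ℝ} : ∑ a, myconv f g a = (∑ a, f a) * (∑ a, g a) := by
  unfold myconv
  rw [Finset.sum_comm, Finset.sum_mul]
  refine Finset.sum_congr rfl fun b _ => ?_
  rw [← Finset.mul_sum]
  congr 1
  exact Fintype.sum_equiv (Equiv.subRight b) _ _ (fun a => rfl)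

lemma convPow_nonneg {f : G → ℝ} (hf : ∀ a, 0 ≤ f a) : ∀ n a, 0 ≤ convPow f n a := by
  intro n
  induction n with
  | zero => intro a; unfold convPow mydelta; positivity
  | succ n ih => exact myconv_nonneg hf ih

lemma sum_mydelta : ∑ a : G, mydelta a = 1 := by
  unfold mydelta
  simp

lemma sum_convPow {f : G → ℝ} (hf : ∑ a, f a = 1) : ∀ n, ∑ a, convPow f n a = 1 := by
  intro n
  induction n with
  | zero => exact sum_mydelta
  | succ n ih => show ∑ a, myconv f (convPow f n) a = 1; rw [sum_myconv, hf, ih, one_mul]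

lemma convPow_succ_eq (f : G → ℝ) (n : ℕ) : convPow f (n + 1) = myconv f (convPow f n) := rfl

lemma myconv_ge {f g : G → ℝ} (hf : ∀ a, 0 ≤ f a) (hg : ∀ a, 0 ≤ g a) (x y : G) :
    f x * g y ≤ myconv f g (x + y) := by
  have h : f x * g (x + y - x) ≤ myconv f g (x + y) :=
    Finset.single_le_sum (f := fun b => f b * g (x + y - b))
      (fun b _ => mul_nonneg (hf b) (hg _)) (Finset.mem_univ x)
  rwa [show x + y - x = y from by abel] at h

lemma convPow_add (f : G → ℝ) (m n : ℕ) (a : G) :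
    convPow f (m + n) a = ∑ b, convPow f m b * convPow f n (a - b) := by
  induction m generalizing a with
  | zero =>
    simp only [Nat.zero_add]
    rw [show ∑ b, convPow f 0 b * convPow f n (a - b) = convPow f n a by
      unfold convPow mydelta
      rw [Finset.sum_eq_single 0]
      · simp
      · intro b _ hb; simp [hb]
      · intro h; exact absurd (Finset.mem_univ 0) h]
  | succ m ih =>
    rw [show m + 1 + n = (m + n) + 1 from by omega]
    show myconv f (convPow f (m + n)) a = _
    unfold myconv
    calc ∑ c, f c * convPow f (m + n) (a - c)
        = ∑ c, f c * ∑ b, convPow f m b * convPow f n (a - c - b) := by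
          refine Finset.sum_congr rfl fun c _ => ?_; rw [ih]
      _ = ∑ c, ∑ b, f c * (convPow f m (b - c) * convPow f n (a - b)) := by
          refine Finset.sum_congr rfl fun c _ => ?_
          rw [Finset.mul_sum]
          refine Fintype.sum_equiv (Equiv.addRight c) _ _ (fun b => ?_)
          simp only [Equiv.coe_addRight]
          rw [add_sub_cancel_right, show a - (b + c) = a - c - b from by abel]
      _ = ∑ b, ∑ c, f c * (convPow f m (b - c) * convPow f n (a - b)) := Finset.sum_comm
      _ = ∑ b, (∑ c, f c * convPow f m (b - c)) * convPow f n (a - b) := by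
          refine Finset.sum_congr rfl fun b _ => ?_
          rw [Finset.sum_mul]; refine Finset.sum_congr rfl fun c _ => ?_; ring
      _ = ∑ b, convPow f (m + 1) b * convPow f n (a - b) := rfl

end Conv

section Mixing

variable {G : Type*} [AddCommGroup G] [Fintype G] [DecidableEq G]

theorem mixing_upper (q : G → ℝ) (hq0 : ∀ a, 0 ≤ q a) (hq1 : ∑ a, q a = 1)
    (t : ℕ) (ht : ∀ a, 0 < convPow q t a) :
    ∀ ε : ℝ, 0 < ε → ∃ N, ∀ n ≥ N, ∀ a, convPow q n a ≤ 1 / (Fintype.card G) + ε := by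
  intro ε hε
  haveI : Nonempty G := ⟨0⟩
  set k : ℝ := (Fintype.card G : ℝ) with hk_def
  have hk : (0 : ℝ) < k := by positivity
  set M : ℕ → ℝ := fun n => Finset.univ.sup' Finset.univ_nonempty (convPow q n) with hM_def
  have hMle : ∀ n a, convPow q n a ≤ M n := fun n a =>
    Finset.le_sup' (convPow q n) (Finset.mem_univ a)
  have hManti : Antitone M := by
    refine antitone_nat_of_succ_le fun n => ?_
    refine Finset.sup'_le _ _ fun a _ => ?_
    show myconv q (convPow q n) a ≤ M n
    calc myconv q (convPow q n) a = ∑ b, q b * convPow q n (a - b) := rfl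
      _ ≤ ∑ b, q b * M n := Finset.sum_le_sum fun b _ =>
          mul_le_mul_of_nonneg_left (hMle n _) (hq0 b)
      _ = M n := by rw [← Finset.sum_mul, hq1, one_mul]
  have hMge : ∀ n, 1 / k ≤ M n := by
    intro n
    rw [div_le_iff₀ hk]
    calc (1:ℝ) = ∑ a, convPow q n a := (sum_convPow hq1 n).symm
      _ ≤ ∑ _a : G, M n := Finset.sum_le_sum fun a _ => hMle n a
      _ = M n * k := by rw [Finset.sum_const, Finset.card_univ, nsmul_eq_mul]; ring
  set δ : ℝ := Finset.univ.inf' Finset.univ_nonempty (convPow q t) with hδ_def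
  have hδle : ∀ b, δ ≤ convPow q t b := fun b =>
    Finset.inf'_le (convPow q t) (Finset.mem_univ b)
  have hδ : 0 < δ := by
    obtain ⟨b, _, hb⟩ := Finset.exists_mem_eq_inf' (Finset.univ_nonempty) (convPow q t)
    rw [hδ_def, hb]; exact ht b
  have hkδ : k * δ ≤ 1 := by
    calc k * δ = ∑ _b : G, δ := by rw [Finset.sum_const, Finset.card_univ, nsmul_eq_mul]
      _ ≤ ∑ b, convPow q t b := Finset.sum_le_sum fun b _ => hδle b
      _ = 1 := sum_convPow hq1 t
  set c : ℝ := 1 - k * δ with hc_def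
  have hc0 : 0 ≤ c := by linarith
  have hc1 : c < 1 := by nlinarith
  have key : ∀ n, M (t + n) - 1 / k ≤ c * (M n - 1 / k) := by
    intro n
    have hstep : M (t + n) ≤ c * M n + δ := by
      refine Finset.sup'_le _ _ fun a _ => ?_
      have h1 : convPow q (t + n) a = ∑ b, convPow q t b * convPow q n (a - b) :=
        convPow_add q t n a
      have h2 : ∑ b, convPow q t b * convPow q n (a - b)
          = ∑ b, (convPow q t b - δ) * convPow q n (a - b) + δ * ∑ b, convPow q n (a - b) := by
        rw [Finset.mul_sum, ← Finset.sum_add_distrib]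
        refine Finset.sum_congr rfl fun b _ => ?_; ring
      have h3 : ∑ b, convPow q n (a - b) = 1 := by
        rw [sum_shift (convPow q n) a]; exact sum_convPow hq1 n
      have h4 : ∑ b, (convPow q t b - δ) * convPow q n (a - b)
          ≤ ∑ b, (convPow q t b - δ) * M n := by
        refine Finset.sum_le_sum fun b _ => ?_
        exact mul_le_mul_of_nonneg_left (hMle n _) (by linarith [hδle b])
      have h5 : ∑ b, (convPow q t b - δ) * M n = c * M n := by
        rw [← Finset.sum_mul, Finset.sum_sub_distrib, sum_convPow hq1 t,
          Finset.sum_const, Finset.card_univ, nsmul_eq_mul, hc_def]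
      rw [h1, h2, h3]
      linarith
    have hexp : c * (M n - 1 / k) = c * M n + δ - 1 / k := by
      rw [hc_def]; field_simp; ring
    calc M (t + n) - 1 / k ≤ (c * M n + δ) - 1 / k := by
          exact sub_le_sub_right hstep _
      _ = c * (M n - 1 / k) := hexp.symm
  have iter : ∀ j, M (j * t) - 1 / k ≤ c ^ j * (M 0 - 1 / k) := by
    intro j
    induction j with
    | zero => simp
    | succ j ih =>
      have h1 : M ((j + 1) * t) - 1 / k ≤ c * (M (j * t) - 1 / k) := by
        have := key (j * t)
        rw [show t + j * t = (j + 1) * t from by ring] at this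
        exact this
      calc M ((j + 1) * t) - 1 / k ≤ c * (M (j * t) - 1 / k) := h1
        _ ≤ c * (c ^ j * (M 0 - 1 / k)) := mul_le_mul_of_nonneg_left ih hc0
        _ = c ^ (j + 1) * (M 0 - 1 / k) := by ring
  have hM0 : M 0 - 1 / k ≤ 1 := by
    have : M 0 ≤ 1 := by
      refine Finset.sup'_le _ _ fun a _ => ?_
      show mydelta a ≤ 1
      unfold mydelta
      split <;> norm_num
    have : 0 < 1 / k := by positivity
    linarith
  obtain ⟨j, hj⟩ := ((tendsto_pow_atTop_nhds_zero_of_lt_one hc0 hc1).eventually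
    (gt_mem_nhds hε)).exists
  refine ⟨j * t, fun n hn a => ?_⟩
  have h1 : M n ≤ M (j * t) := hManti hn
  have h2 : M (j * t) - 1 / k ≤ c ^ j * (M 0 - 1 / k) := iter j
  have h3 : c ^ j * (M 0 - 1 / k) ≤ c ^ j := by
    nlinarith [pow_nonneg hc0 j]
  have h4 := hMle n a
  show convPow q n a ≤ 1 / k + ε
  linarith
end Mixing

section Positivity

variable {G : Type*} [AddCommGroup G] [Fintype G] [DecidableEq G]

lemma convPow_pos_of_reachable (q : G → ℝ) (hq0 : ∀ a, 0 ≤ q a) (e1 e2 : G)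
    (h1 : 0 < q e1) (h1' : 0 < q (-e1)) (h2 : 0 < q e2) (h2' : 0 < q (-e2)) :
    ∀ m x y : ℕ, x + y ≤ m → 0 < convPow q (2 * m) (x • (e1 + e2) + y • (e1 - e2)) := by
  intro m
  induction m with
  | zero =>
    intro x y hxy
    obtain ⟨rfl, rfl⟩ : x = 0 ∧ y = 0 := by omega
    simp only [zero_smul, add_zero]
    show (0:ℝ) < mydelta 0
    simp [mydelta]
  | succ m ih =>
    intro x y hxy
    have hnn : ∀ a, 0 ≤ convPow q (2 * m) a := convPow_nonneg hq0 (2 * m)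
    have hnn2 : ∀ a, 0 ≤ myconv q (convPow q (2 * m)) a := myconv_nonneg hq0 hnn
    have hpow : convPow q (2 * (m + 1)) = myconv q (myconv q (convPow q (2 * m))) := by
      rw [show 2 * (m + 1) = (2 * m) + 1 + 1 from by ring]
      rfl
    rw [hpow]
    rcases Nat.eq_zero_or_pos x with hx | hx
    · rcases Nat.eq_zero_or_pos y with hy | hy
      · subst hx; subst hy
        have base : 0 < convPow q (2 * m) ((0:ℕ) • (e1 + e2) + (0:ℕ) • (e1 - e2)) :=
          ih 0 0 (by omega)
        simp only [zero_smul, add_zero] at base ⊢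
        have step1 : q (-e1) * convPow q (2 * m) 0 ≤ myconv q (convPow q (2 * m)) (-e1 + 0) :=
          myconv_ge hq0 hnn _ _
        have step2 : q e1 * myconv q (convPow q (2 * m)) (-e1 + 0)
            ≤ myconv q (myconv q (convPow q (2 * m))) (e1 + (-e1 + 0)) :=
          myconv_ge hq0 hnn2 _ _
        have : e1 + (-e1 + 0) = (0 : G) := by abel
        rw [this] at step2
        have : (0:ℝ) < q e1 * (q (-e1) * convPow q (2 * m) 0) := by positivity
        calc (0:ℝ) < q e1 * (q (-e1) * convPow q (2 * m) 0) := this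
          _ ≤ q e1 * myconv q (convPow q (2 * m)) (-e1 + 0) :=
            mul_le_mul_of_nonneg_left step1 (le_of_lt h1)
          _ ≤ _ := step2
      · -- y ≥ 1
        obtain ⟨y', rfl⟩ : ∃ y', y = y' + 1 := ⟨y - 1, by omega⟩
        have base : 0 < convPow q (2 * m) (x • (e1 + e2) + y' • (e1 - e2)) :=
          ih x y' (by omega)
        set w := x • (e1 + e2) + y' • (e1 - e2) with hw
        have htarget : x • (e1 + e2) + (y' + 1) • (e1 - e2) = e1 + (-e2 + w) := by
          rw [hw, succ_nsmul]
          abel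
        rw [htarget]
        have step1 : q (-e2) * convPow q (2 * m) w ≤ myconv q (convPow q (2 * m)) (-e2 + w) :=
          myconv_ge hq0 hnn _ _
        have step2 : q e1 * myconv q (convPow q (2 * m)) (-e2 + w)
            ≤ myconv q (myconv q (convPow q (2 * m))) (e1 + (-e2 + w)) :=
          myconv_ge hq0 hnn2 _ _
        have hp : (0:ℝ) < q e1 * (q (-e2) * convPow q (2 * m) w) := by positivity
        calc (0:ℝ) < q e1 * (q (-e2) * convPow q (2 * m) w) := hp
          _ ≤ q e1 * myconv q (convPow q (2 * m)) (-e2 + w) :=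
            mul_le_mul_of_nonneg_left step1 (le_of_lt h1)
          _ ≤ _ := step2
    · -- x ≥ 1
      obtain ⟨x', rfl⟩ : ∃ x', x = x' + 1 := ⟨x - 1, by omega⟩
      have base : 0 < convPow q (2 * m) (x' • (e1 + e2) + y • (e1 - e2)) :=
        ih x' y (by omega)
      set w := x' • (e1 + e2) + y • (e1 - e2) with hw
      have htarget : (x' + 1) • (e1 + e2) + y • (e1 - e2) = e1 + (e2 + w) := by
        rw [hw, succ_nsmul]
        abel
      rw [htarget]
      have step1 : q e2 * convPow q (2 * m) w ≤ myconv q (convPow q (2 * m)) (e2 + w) :=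
        myconv_ge hq0 hnn _ _
      have step2 : q e1 * myconv q (convPow q (2 * m)) (e2 + w)
          ≤ myconv q (myconv q (convPow q (2 * m))) (e1 + (e2 + w)) :=
        myconv_ge hq0 hnn2 _ _
      have hp : (0:ℝ) < q e1 * (q e2 * convPow q (2 * m) w) := by positivity
      calc (0:ℝ) < q e1 * (q e2 * convPow q (2 * m) w) := hp
        _ ≤ q e1 * myconv q (convPow q (2 * m)) (e2 + w) :=
          mul_le_mul_of_nonneg_left step1 (le_of_lt h1)
        _ ≤ _ := step2

end Positivity

section ZModReach

lemma zmod_two_ne_zero (p : ℕ) [Fact p.Prime] (hp2 : p ≠ 2) : (2 : ZMod p) ≠ 0 := by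
  have hp : p.Prime := Fact.out
  intro h
  have h2 : ((2 : ℕ) : ZMod p) = 0 := by exact_mod_cast h
  rw [ZMod.natCast_eq_zero_iff] at h2
  have := (Nat.prime_dvd_prime_iff_eq hp Nat.prime_two).mp h2
  exact hp2 this

lemma zmod_reach (p : ℕ) [Fact p.Prime] (hp2 : p ≠ 2) (s : ZMod p × ZMod p) :
    ∃ x y : ℕ, x + y ≤ 2 * (p - 1) ∧
      x • (((1:ZMod p), (1:ZMod p))) + y • (((1:ZMod p), (-1:ZMod p))) = s := by
  have hp : p.Prime := Fact.out
  haveI : NeZero p := ⟨hp.ne_zero⟩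
  have h2 : (2 : ZMod p) ≠ 0 := zmod_two_ne_zero p hp2
  set u := (s.1 + s.2) / 2 with hu
  set v := (s.1 - s.2) / 2 with hv
  refine ⟨u.val, v.val, ?_, ?_⟩
  · have h1 := ZMod.val_lt u
    have h2 := ZMod.val_lt v
    omega
  · have hcu : ((u.val : ℕ) : ZMod p) = u := by
      simp [ZMod.natCast_val, ZMod.cast_id]
    have hcv : ((v.val : ℕ) : ZMod p) = v := by
      simp [ZMod.natCast_val, ZMod.cast_id]
    have huv1 : u + v = s.1 := by
      rw [hu, hv, ← add_div]
      rw [show s.1 + s.2 + (s.1 - s.2) = 2 * s.1 from by ring]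
      exact mul_div_cancel_left₀ s.1 h2
    have huv2 : u - v = s.2 := by
      rw [hu, hv, div_sub_div_same]
      rw [show s.1 + s.2 - (s.1 - s.2) = 2 * s.2 from by ring]
      exact mul_div_cancel_left₀ s.2 h2
    have : (u.val • ((1:ZMod p), (1:ZMod p)) + v.val • ((1:ZMod p), (-1:ZMod p)))
        = (u + v, u - v) := by
      ext
      · simp [Prod.fst_add, smul_eq_mul, hcu, hcv]
      · simp only [Prod.snd_add, Prod.smul_mk, smul_eq_mul, nsmul_eq_mul, mul_one, mul_neg,
          hcu, hcv]
        ring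
    rw [this, huv1, huv2]

end ZModReach

section Det

lemma det_pm_one_of_closure (u v : ℤ × ℤ)
    (h : AddSubgroup.closure ({u, v} : Set (ℤ × ℤ)) = ⊤) :
    u.1 * v.2 - u.2 * v.1 = 1 ∨ u.1 * v.2 - u.2 * v.1 = -1 := by
  have h1 : ((1 : ℤ), (0 : ℤ)) ∈ AddSubgroup.closure ({u, v} : Set (ℤ × ℤ)) := by
    rw [h]; trivial
  have h2 : ((0 : ℤ), (1 : ℤ)) ∈ AddSubgroup.closure ({u, v} : Set (ℤ × ℤ)) := by
    rw [h]; trivial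
  rw [AddSubgroup.mem_closure_pair] at h1 h2
  obtain ⟨a, b, hab⟩ := h1
  obtain ⟨c, d, hcd⟩ := h2
  have hab1 : a * u.1 + b * v.1 = 1 := by
    have := congrArg Prod.fst hab
    simpa [zsmul_eq_mul] using this
  have hab2 : a * u.2 + b * v.2 = 0 := by
    have := congrArg Prod.snd hab
    simpa [zsmul_eq_mul] using this
  have hcd1 : c * u.1 + d * v.1 = 0 := by
    have := congrArg Prod.fst hcd
    simpa [zsmul_eq_mul] using this
  have hcd2 : c * u.2 + d * v.2 = 1 := by
    have := congrArg Prod.snd hcd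
    simpa [zsmul_eq_mul] using this
  have key : (a * d - b * c) * (u.1 * v.2 - u.2 * v.1) = 1 := by
    linear_combination (c * u.2 + d * v.2) * hab1 + hcd2 - (a * u.2 + b * v.2) * hcd1
  have key' : (u.1 * v.2 - u.2 * v.1) * (a * d - b * c) = 1 := by linear_combination key
  rcases Int.eq_one_or_neg_one_of_mul_eq_one' key' with h | h
  · exact Or.inl h.1
  · exact Or.inr h.1

lemma fiber_card_le (p : ℕ) [Fact p.Prime] (u : ZMod p × ZMod p) (c : ZMod p) (hc : c ≠ 0) :
    (Finset.univ.filter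
      (fun v : ZMod p × ZMod p => u.1 * v.2 - u.2 * v.1 = c)).card ≤ p := by
  classical
  have : (Finset.univ.filter
      (fun v : ZMod p × ZMod p => u.1 * v.2 - u.2 * v.1 = c)).card
      ≤ (Finset.univ : Finset (ZMod p)).card := by
    refine Finset.card_le_card_of_injOn (fun v => if u.1 = 0 then v.2 else v.1)
      (fun _ _ => Finset.mem_univ _) ?_
    intro v hv w hw hvw
    simp only [Finset.mem_coe, Finset.mem_filter] at hv hw
    by_cases h0 : u.1 = 0
    · simp only [h0, if_true] at hvw
      have hu2 : u.2 ≠ 0 := by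
        intro h2
        apply hc
        have e := hv.2
        rw [h0, h2] at e
        simpa using e.symm
      have hv1 : v.1 = w.1 := by
        have e1 := hv.2
        have e2 := hw.2
        rw [h0] at e1 e2
        simp only [zero_mul, zero_sub] at e1 e2
        have : u.2 * v.1 = u.2 * w.1 := by linear_combination e2 - e1
        exact mul_left_cancel₀ hu2 this
      exact Prod.ext hv1 hvw
    · simp only [h0, if_false] at hvw
      have hv2 : v.2 = w.2 := by
        have e1 := hv.2
        have e2 := hw.2
        rw [← hvw] at e2
        have : u.1 * v.2 = u.1 * w.2 := by
          have := e1.trans e2.symm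
          linear_combination this
        exact mul_left_cancel₀ h0 this
      exact Prod.ext hvw hv2
  simpa [ZMod.card] using this

end Det

section Prob

open MeasureTheory ProbabilityTheory
open scoped ENNReal

def stepF : Finset (ℤ × ℤ) := {(1,0), (-1,0), (0,1), (0,-1)}

def phiM (p : ℕ) : ℤ × ℤ →+ ZMod p × ZMod p :=
  AddMonoidHom.prodMap (Int.castAddHom (ZMod p)) (Int.castAddHom (ZMod p))

noncomputable def qdist (p : ℕ) : ZMod p × ZMod p → ℝ :=
  fun g => ((stepF.filter (fun s => phiM p s = g)).card : ℝ) / 4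

lemma stepF_card : stepF.card = 4 := by decide

lemma qdist_nonneg (p : ℕ) (g : ZMod p × ZMod p) : 0 ≤ qdist p g := by
  unfold qdist; positivity

lemma qdist_sum (p : ℕ) [NeZero p] : ∑ g, qdist p g = 1 := by
  unfold qdist
  rw [← Finset.sum_div]
  rw [show ∑ g, ((stepF.filter (fun s => phiM p s = g)).card : ℝ)
      = ((∑ g : ZMod p × ZMod p, (stepF.filter (fun s => phiM p s = g)).card : ℕ) : ℝ) from by
    push_cast; rfl]
  rw [← Finset.card_eq_sum_card_fiberwise (f := phiM p) (s := stepF) (t := Finset.univ)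
    (fun s _ => Finset.mem_univ _)]
  rw [stepF_card]
  norm_num

lemma qdist_pos (p : ℕ) {s : ℤ × ℤ} (hs : s ∈ stepF) : (1:ℝ)/4 ≤ qdist p (phiM p s) := by
  unfold qdist
  have : 1 ≤ (stepF.filter (fun t => phiM p t = phiM p s)).card :=
    Finset.card_pos.mpr ⟨s, Finset.mem_filter.mpr ⟨hs, rfl⟩⟩
  have h := Nat.one_le_iff_ne_zero.mp this
  have : (1:ℝ) ≤ ((stepF.filter (fun t => phiM p t = phiM p s)).card : ℝ) := by
    exact_mod_cast this
  linarith

variable {Ω : Type*} [MeasurableSpace Ω] (μ : Measure Ω) [IsProbabilityMeasure μ]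

lemma step_dist (ξ : Bool × ℕ → Ω → ℤ × ℤ) (hmeas : ∀ i, Measurable (ξ i))
    (hdist : ∀ i, ∀ s ∈ ({(1, 0), (-1, 0), (0, 1), (0, -1)} : Set (ℤ × ℤ)),
      μ {ω | ξ i ω = s} = 1 / 4)
    (p : ℕ) (i : Bool × ℕ) (g : ZMod p × ZMod p) :
    μ {ω | phiM p (ξ i ω) = g} = ENNReal.ofReal (qdist p g) := by
  classical
  set E : ℤ × ℤ → Set Ω := fun s => ξ i ⁻¹' {s} with hE
  have hEmeas : ∀ s, MeasurableSet (E s) := fun s =>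
    hmeas i (measurableSet_singleton s)
  have hEval : ∀ s ∈ stepF, μ (E s) = 1 / 4 := by
    intro s hs
    apply hdist i
    revert hs
    simp only [stepF, Finset.mem_insert, Finset.mem_singleton]
    rintro (rfl | rfl | rfl | rfl) <;> simp
  have hdisjoint : (stepF : Set (ℤ × ℤ)).PairwiseDisjoint E := by
    intro s _ t _ hst
    refine Set.disjoint_left.mpr fun ω h1 h2 => hst ?_
    have : ξ i ω = s := h1
    have h2' : ξ i ω = t := h2
    rw [← this, h2']
  have hUtotal : μ (⋃ s ∈ stepF, E s) = 1 := by
    rw [measure_biUnion_finset hdisjoint (fun s _ => hEmeas s)]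
    rw [Finset.sum_congr rfl hEval]
    rw [Finset.sum_const, stepF_card]
    simp
    rw [ENNReal.mul_inv_cancel] <;> norm_num
  have hnull : μ ((⋃ s ∈ stepF, E s)ᶜ) = 0 := by
    have hms : MeasurableSet (⋃ s ∈ stepF, E s) :=
      (stepF : Finset (ℤ×ℤ)).measurableSet_biUnion (fun s _ => hEmeas s)
    rw [measure_compl hms (measure_ne_top μ _), hUtotal, measure_univ, tsub_self]
  set filt := stepF.filter (fun s => phiM p s = g) with hfilt
  have hAval : μ (⋃ s ∈ filt, E s) = (filt.card : ℝ≥0∞) / 4 := by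
    rw [measure_biUnion_finset (hdisjoint.subset (by
      intro x hx
      exact Finset.mem_coe.mpr (Finset.mem_of_mem_filter x (Finset.mem_coe.mp hx))))
      (fun s _ => hEmeas s)]
    rw [Finset.sum_congr rfl (fun s hs => hEval s (Finset.mem_of_mem_filter s hs))]
    rw [Finset.sum_const]
    simp [div_eq_mul_inv]
    rfl
  have hle : μ {ω | phiM p (ξ i ω) = g} ≤ (filt.card : ℝ≥0∞) / 4 := by
    have hsub : {ω | phiM p (ξ i ω) = g} ⊆ (⋃ s ∈ filt, E s) ∪ (⋃ s ∈ stepF, E s)ᶜ := by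
      intro ω hω
      by_cases hmem : ξ i ω ∈ stepF
      · left
        exact Set.mem_biUnion (Finset.mem_filter.mpr ⟨hmem, hω⟩) rfl
      · right
        simp only [Set.mem_compl_iff, Set.mem_iUnion]
        rintro ⟨s, hs, hsE⟩
        exact hmem (by rwa [show ξ i ω = s from hsE] )
    calc μ {ω | phiM p (ξ i ω) = g} ≤ μ ((⋃ s ∈ filt, E s) ∪ (⋃ s ∈ stepF, E s)ᶜ) :=
          measure_mono hsub
      _ ≤ μ (⋃ s ∈ filt, E s) + μ ((⋃ s ∈ stepF, E s)ᶜ) := measure_union_le _ _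
      _ = (filt.card : ℝ≥0∞) / 4 := by rw [hAval, hnull, add_zero]
  have hge : (filt.card : ℝ≥0∞) / 4 ≤ μ {ω | phiM p (ξ i ω) = g} := by
    rw [← hAval]
    refine measure_mono ?_
    intro ω hω
    simp only [Set.mem_iUnion] at hω
    obtain ⟨s, hs, hsE⟩ := hω
    have h1 : ξ i ω = s := hsE
    have h2 := (Finset.mem_filter.mp hs).2
    show phiM p (ξ i ω) = g
    rw [h1, h2]
  have heq := le_antisymm hle hge
  rw [heq]
  unfold qdist
  rw [← hfilt, ENNReal.ofReal_div_of_pos (by norm_num), ENNReal.ofReal_natCast]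
  norm_num

end Prob

section Prob2

open MeasureTheory ProbabilityTheory
open scoped ENNReal

variable {Ω : Type*} [MeasurableSpace Ω] (μ : Measure Ω) [IsProbabilityMeasure μ]

lemma sum_dist (ξ : Bool × ℕ → Ω → ℤ × ℤ) (hmeas : ∀ i, Measurable (ξ i))
    (hindep : iIndepFun ξ μ)
    (hdist : ∀ i, ∀ s ∈ ({(1, 0), (-1, 0), (0, 1), (0, -1)} : Set (ℤ × ℤ)),
      μ {ω | ξ i ω = s} = 1 / 4)
    (p : ℕ) [NeZero p] (b : Bool) :
    ∀ n a, μ {ω | (∑ i ∈ Finset.range n, phiM p (ξ (b, i) ω)) = a}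
      = ENNReal.ofReal (convPow (qdist p) n a) := by
  classical
  set η : Bool × ℕ → Ω → ZMod p × ZMod p := fun i ω => phiM p (ξ i ω) with hη_def
  have hηmeas : ∀ i, Measurable (η i) := fun i =>
    (Measurable.of_discrete (f := fun z => phiM p z)).comp (hmeas i)
  have hη : iIndepFun η μ :=
    hindep.comp _ (fun i => Measurable.of_discrete)
  intro n
  induction n with
  | zero =>
    intro a
    simp only [Finset.range_zero, Finset.sum_empty]
    show μ {ω | (0 : ZMod p × ZMod p) = a} = ENNReal.ofReal (mydelta a)
    by_cases h : a = 0
    · subst h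
      simp only [eq_self_iff_true, Set.setOf_true]
      simp [mydelta]
    · have : {ω : Ω | (0 : ZMod p × ZMod p) = a} = ∅ := by
        ext ω; simp [Ne.symm h]
      rw [this]
      simp [mydelta, h]
  | succ n ih =>
    intro a
    have hsum : ∀ ω, ∑ i ∈ Finset.range (n+1), η (b, i) ω
        = (∑ i ∈ Finset.range n, η (b, i) ω) + η (b, n) ω := fun ω =>
      Finset.sum_range_succ _ n
    set S : Ω → ZMod p × ZMod p := fun ω => ∑ i ∈ Finset.range n, η (b, i) ω with hS_def
    set Y : Ω → ZMod p × ZMod p := fun ω => η (b, n) ω with hY_def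
    have hSmeas : Measurable S := by
      apply Finset.measurable_sum
      intro i _
      exact hηmeas (b, i)
    have hYmeas : Measurable Y := hηmeas (b, n)
    -- independence of S and Y
    have hindepSY : IndepFun S Y μ := by
      set sfin : Finset (Bool × ℕ) := (Finset.range n).map
        ⟨fun i => (b, i), fun x y h => by simpa using h⟩ with hsfin
      have hnotmem : (b, n) ∉ sfin := by
        simp only [hsfin, Finset.mem_map, Function.Embedding.coeFn_mk, Finset.mem_range]
        rintro ⟨i, hi, hbi⟩
        have : i = n := congrArg Prod.snd hbi
        omega
      have h1 : IndepFun (∑ i ∈ sfin, η i) (η (b, n)) μ :=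
        hη.indepFun_finsetSum_of_notMem hηmeas hnotmem
      have h2 : (∑ i ∈ sfin, η i) = S := by
        funext ω
        rw [Finset.sum_apply]
        rw [hsfin, Finset.sum_map]
        rfl
      rwa [h2] at h1
    have hevent : {ω | (∑ i ∈ Finset.range (n+1), η (b, i) ω) = a}
        = ⋃ g ∈ (Finset.univ : Finset (ZMod p × ZMod p)),
          (S ⁻¹' {a - g} ∩ Y ⁻¹' {g}) := by
      ext ω
      simp only [Set.mem_setOf_eq, Set.mem_iUnion, Finset.mem_univ, exists_true_left,
        Set.mem_inter_iff, Set.mem_preimage, Set.mem_singleton_iff, exists_prop, true_and]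
      constructor
      · intro h
        refine ⟨Y ω, ?_, rfl⟩
        rw [hsum ω] at h
        show S ω = a - Y ω
        rw [← h]; abel
      · rintro ⟨g, hg1, hg2⟩
        rw [hsum ω]
        show S ω + Y ω = a
        rw [hg1, hg2]; abel
    rw [hevent]
    rw [measure_biUnion_finset ?disj ?meas]
    case disj =>
      intro g _ g' _ hgg'
      refine Set.disjoint_left.mpr fun ω h1 h2 => hgg' ?_
      have e1 : Y ω = g := h1.2
      have e2 : Y ω = g' := h2.2
      rw [← e1, e2]
    case meas =>
      intro g _
      exact (hSmeas (measurableSet_singleton _)).inter (hYmeas (measurableSet_singleton _))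
    have hterm : ∀ g : ZMod p × ZMod p, μ (S ⁻¹' {a - g} ∩ Y ⁻¹' {g})
        = ENNReal.ofReal (qdist p g * convPow (qdist p) n (a - g)) := by
      intro g
      rw [hindepSY.measure_inter_preimage_eq_mul _ _ (measurableSet_singleton _)
        (measurableSet_singleton _)]
      have hS : μ (S ⁻¹' {a - g}) = ENNReal.ofReal (convPow (qdist p) n (a - g)) := ih (a - g)
      have hY : μ (Y ⁻¹' {g}) = ENNReal.ofReal (qdist p g) :=
        step_dist μ ξ hmeas hdist p (b, n) g
      rw [hS, hY, ← ENNReal.ofReal_mul (convPow_nonneg (qdist_nonneg p) n _)]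
      rw [mul_comm]
    rw [Finset.sum_congr rfl (fun g _ => hterm g)]
    rw [← ENNReal.ofReal_sum_of_nonneg (fun g _ =>
      mul_nonneg (qdist_nonneg p g) (convPow_nonneg (qdist_nonneg p) n _))]
    rfl

end Prob2

section Prob3

open MeasureTheory ProbabilityTheory
open scoped ENNReal

variable {Ω : Type*} [MeasurableSpace Ω] (μ : Measure Ω) [IsProbabilityMeasure μ]

lemma joint_indep (ξ : Bool × ℕ → Ω → ℤ × ℤ) (hmeas : ∀ i, Measurable (ξ i))
    (hindep : iIndepFun ξ μ) (p : ℕ) [NeZero p] (n : ℕ) :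
    IndepFun (fun ω => ∑ i ∈ Finset.range n, phiM p (ξ (false, i) ω))
      (fun ω => ∑ i ∈ Finset.range n, phiM p (ξ (true, i) ω)) μ := by
  classical
  haveI : MeasurableAdd₂ (ZMod p × ZMod p) := ⟨Measurable.of_discrete⟩
  set η : Bool × ℕ → Ω → ZMod p × ZMod p := fun i ω => phiM p (ξ i ω) with hη_def
  have hηmeas : ∀ i, Measurable (η i) := fun i =>
    (Measurable.of_discrete (f := fun z => phiM p z)).comp (hmeas i)
  have hη : iIndepFun η μ :=
    hindep.comp _ (fun i => Measurable.of_discrete)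
  set sfalse : Finset (Bool × ℕ) := (Finset.range n).map
    ⟨fun i => (false, i), fun x y h => by simpa using h⟩ with hsf
  set strue : Finset (Bool × ℕ) := (Finset.range n).map
    ⟨fun i => (true, i), fun x y h => by simpa using h⟩ with hst
  have hdisj : Disjoint sfalse strue := by
    rw [Finset.disjoint_left]
    rintro ⟨b, i⟩ h1 h2
    simp only [hsf, hst, Finset.mem_map, Function.Embedding.coeFn_mk] at h1 h2
    obtain ⟨x, _, hx⟩ := h1
    obtain ⟨y, _, hy⟩ := h2
    rw [← hy] at hx
    exact Bool.false_ne_true (congrArg Prod.fst hx)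
  have h := hη.indepFun_finset sfalse strue hdisj hηmeas
  have hFmeas : Measurable (fun v : (i : sfalse) → ZMod p × ZMod p => ∑ i, v i) :=
    Finset.measurable_sum _ (fun i _ => measurable_pi_apply i)
  have hGmeas : Measurable (fun v : (i : strue) → ZMod p × ZMod p => ∑ i, v i) :=
    Finset.measurable_sum _ (fun i _ => measurable_pi_apply i)
  have h2 := h.comp hFmeas hGmeas
  have e1 : ((fun v : (i : sfalse) → ZMod p × ZMod p => ∑ i, v i)
      ∘ (fun a (i : sfalse) => η i a))
      = fun ω => ∑ i ∈ Finset.range n, phiM p (ξ (false, i) ω) := by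
    funext ω
    show ∑ i : sfalse, η i ω = _
    rw [Finset.sum_coe_sort sfalse (fun i => η i ω), hsf, Finset.sum_map]
    rfl
  have e2 : ((fun v : (i : strue) → ZMod p × ZMod p => ∑ i, v i)
      ∘ (fun a (i : strue) => η i a))
      = fun ω => ∑ i ∈ Finset.range n, phiM p (ξ (true, i) ω) := by
    funext ω
    show ∑ i : strue, η i ω = _
    rw [Finset.sum_coe_sort strue (fun i => η i ω), hst, Finset.sum_map]
    rfl
  rwa [e1, e2] at h2

end Prob3
end

/-- **Statement 18.** Let `(S_n)` and `(T_n)` be two independent simple random walks on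
`ℤ²` (all steps independent and uniform on `{(1,0), (-1,0), (0,1), (0,-1)}`; the walk
`S` uses the steps indexed by `(false, i)` and the walk `T` those indexed by
`(true, i)`).  Then the probability that `{S_n, T_n}` generates `ℤ²` tends to `0` as
`n → ∞`. -/
theorem two_walks_generate_prob_tendsto_zero {Ω : Type*} [MeasurableSpace Ω]
    (μ : Measure Ω) [IsProbabilityMeasure μ] (ξ : Bool × ℕ → Ω → ℤ × ℤ)
    (hmeas : ∀ p, Measurable (ξ p))
    (hindep : iIndepFun ξ μ)
    (hdist : ∀ p, ∀ s ∈ ({(1, 0), (-1, 0), (0, 1), (0, -1)} : Set (ℤ × ℤ)),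
      μ {ω | ξ p ω = s} = 1 / 4) :
    Tendsto (fun n : ℕ =>
        μ {ω | AddSubgroup.closure
            {∑ i ∈ Finset.range n, ξ (false, i) ω,
              ∑ i ∈ Finset.range n, ξ (true, i) ω} = ⊤})
      atTop (nhds 0) := by
  
  classical
  rw [ENNReal.tendsto_atTop_zero]
  intro ε hε
  have hmin_ne_top : (min 1 ε) ≠ ⊤ :=
    (lt_of_le_of_lt (min_le_left _ _) (by norm_num)).ne
  have hmin_pos : 0 < min 1 ε := lt_min (by norm_num) hε
  set δr : ℝ := (min 1 ε).toReal with hδr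
  have hδrpos : 0 < δr := ENNReal.toReal_pos hmin_pos.ne' hmin_ne_top
  have hofReal : ENNReal.ofReal δr ≤ ε := by
    rw [hδr, ENNReal.ofReal_toReal hmin_ne_top]; exact min_le_right _ _
  obtain ⟨p, hple, hp⟩ := Nat.exists_infinite_primes (max 3 (⌈(4:ℝ)/δr⌉₊ + 1))
  haveI : Fact p.Prime := ⟨hp⟩
  haveI : NeZero p := ⟨hp.ne_zero⟩
  have hp3 : 3 ≤ p := le_trans (le_max_left _ _) hple
  have hp2 : p ≠ 2 := by omega
  have hppos : (0:ℝ) < p := by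
    have : (3:ℝ) ≤ p := by exact_mod_cast hp3
    linarith
  have hp4 : (4:ℝ)/δr < p := by
    have h1 : (⌈(4:ℝ)/δr⌉₊ + 1 : ℕ) ≤ p := le_trans (le_max_right _ _) hple
    have h2 : (4:ℝ)/δr ≤ ⌈(4:ℝ)/δr⌉₊ := Nat.le_ceil _
    have h3 : ((⌈(4:ℝ)/δr⌉₊ : ℕ) : ℝ) < p := by exact_mod_cast h1
    linarith
  set e1 : ZMod p × ZMod p := (1, 0) with he1
  set e2 : ZMod p × ZMod p := (0, 1) with he2
  have hphi : ∀ z : ℤ × ℤ, phiM p z = ((z.1 : ZMod p), (z.2 : ZMod p)) := fun z => rfl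
  have hqe1 : (1:ℝ)/4 ≤ qdist p e1 := by
    have h := qdist_pos p (s := ((1:ℤ), (0:ℤ))) (by simp [stepF])
    rwa [show phiM p ((1:ℤ), (0:ℤ)) = e1 from by rw [hphi]; simp [he1]] at h
  have hqe1' : (1:ℝ)/4 ≤ qdist p (-e1) := by
    have h := qdist_pos p (s := ((-1:ℤ), (0:ℤ))) (by simp [stepF])
    rwa [show phiM p ((-1:ℤ), (0:ℤ)) = -e1 from by rw [hphi]; simp [he1, Prod.ext_iff]] at h
  have hqe2 : (1:ℝ)/4 ≤ qdist p e2 := by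
    have h := qdist_pos p (s := ((0:ℤ), (1:ℤ))) (by simp [stepF])
    rwa [show phiM p ((0:ℤ), (1:ℤ)) = e2 from by rw [hphi]; simp [he2]] at h
  have hqe2' : (1:ℝ)/4 ≤ qdist p (-e2) := by
    have h := qdist_pos p (s := ((0:ℤ), (-1:ℤ))) (by simp [stepF])
    rwa [show phiM p ((0:ℤ), (-1:ℤ)) = -e2 from by rw [hphi]; simp [he2, Prod.ext_iff]] at h
  have ht : ∀ a : ZMod p × ZMod p, 0 < convPow (qdist p) (2 * (2 * (p - 1))) a := by
    intro a
    obtain ⟨x, y, hxy, hrep⟩ := zmod_reach p hp2 a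
    have hpos := convPow_pos_of_reachable (qdist p) (qdist_nonneg p) e1 e2
      (by linarith) (by linarith) (by linarith) (by linarith) (2*(p-1)) x y hxy
    have he12 : e1 + e2 = ((1:ZMod p), (1:ZMod p)) := by
      rw [he1, he2, Prod.mk_add_mk, add_zero, zero_add]
    have he12' : e1 - e2 = ((1:ZMod p), (-1:ZMod p)) := by
      rw [he1, he2, Prod.mk_sub_mk, sub_zero, zero_sub]
    rw [he12, he12', hrep] at hpos
    exact hpos
  set ε1 : ℝ := δr / (4 * p) with hε1
  have hε1pos : 0 < ε1 := by rw [hε1]; positivity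
  obtain ⟨N, hN⟩ := mixing_upper (qdist p) (qdist_nonneg p) (qdist_sum p) _ ht ε1 hε1pos
  refine ⟨N, fun n hn => ?_⟩
  set f : ZMod p × ZMod p → ℝ := convPow (qdist p) n with hf
  have hf0 : ∀ a, 0 ≤ f a := convPow_nonneg (qdist_nonneg p) n
  have hfsum : ∑ a, f a = 1 := sum_convPow (qdist_sum p) n
  set B : ℝ := 1 / ((p:ℝ) * p) + ε1 with hB
  have hBpos : 0 < B := by rw [hB]; positivity
  have hfB : ∀ a, f a ≤ B := by
    intro a
    have h := hN n hn a
    have hcard : ((Fintype.card (ZMod p × ZMod p) : ℕ) : ℝ) = (p:ℝ) * p := by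
      rw [Fintype.card_prod, ZMod.card]; push_cast; ring
    rw [hcard] at h
    exact h
  set Sb : Ω → ZMod p × ZMod p := fun ω => ∑ i ∈ Finset.range n, phiM p (ξ (false, i) ω)
    with hSb_def
  set Tb : Ω → ZMod p × ZMod p := fun ω => ∑ i ∈ Finset.range n, phiM p (ξ (true, i) ω)
    with hTb_def
  set P : (ZMod p × ZMod p) × (ZMod p × ZMod p) → Prop :=
    fun w => w.1.1 * w.2.2 - w.1.2 * w.2.1 = 1 ∨ w.1.1 * w.2.2 - w.1.2 * w.2.1 = -1 with hP
  set Bad : Finset ((ZMod p × ZMod p) × (ZMod p × ZMod p)) :=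
    Finset.univ.filter P with hBad
  have hincl : {ω | AddSubgroup.closure
        ({∑ i ∈ Finset.range n, ξ (false, i) ω,
          ∑ i ∈ Finset.range n, ξ (true, i) ω} : Set (ℤ × ℤ)) = ⊤}
      ⊆ ⋃ w ∈ Bad, (Sb ⁻¹' {w.1} ∩ Tb ⁻¹' {w.2}) := by
    intro ω hω
    set u : ℤ × ℤ := ∑ i ∈ Finset.range n, ξ (false, i) ω with hu
    set v : ℤ × ℤ := ∑ i ∈ Finset.range n, ξ (true, i) ω with hv
    have hdet := det_pm_one_of_closure u v hω
    have hSbω : Sb ω = phiM p u := (map_sum (phiM p) (fun i => ξ (false, i) ω)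
      (Finset.range n)).symm
    have hTbω : Tb ω = phiM p v := (map_sum (phiM p) (fun i => ξ (true, i) ω)
      (Finset.range n)).symm
    have hmod : P (phiM p u, phiM p v) := by
      rw [hP]
      rcases hdet with h | h
      · left
        have := congrArg (fun z : ℤ => (z : ZMod p)) h
        push_cast at this
        rw [hphi, hphi]
        exact this
      · right
        have := congrArg (fun z : ℤ => (z : ZMod p)) h
        push_cast at this
        rw [hphi, hphi]
        exact this
    refine Set.mem_biUnion (Finset.mem_filter.mpr ⟨Finset.mem_univ _, hmod⟩) ?_
    exact ⟨by rw [Set.mem_preimage, hSbω]; rfl, by rw [Set.mem_preimage, hTbω]; rfl⟩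
  have hcell : ∀ w ∈ Bad, μ (Sb ⁻¹' {w.1} ∩ Tb ⁻¹' {w.2})
      = ENNReal.ofReal (f w.1 * f w.2) := by
    intro w _
    rw [(joint_indep μ ξ hmeas hindep p n).measure_inter_preimage_eq_mul _ _
      (measurableSet_singleton _) (measurableSet_singleton _)]
    have h1 : μ (Sb ⁻¹' {w.1}) = ENNReal.ofReal (f w.1) :=
      sum_dist μ ξ hmeas hindep hdist p false n w.1
    have h2 : μ (Tb ⁻¹' {w.2}) = ENNReal.ofReal (f w.2) :=
      sum_dist μ ξ hmeas hindep hdist p true n w.2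
    rw [h1, h2, ← ENNReal.ofReal_mul (hf0 _)]
  -- the real sum bound
  have hfibcard : ∀ u : ZMod p × ZMod p,
      (Finset.univ.filter (fun v : ZMod p × ZMod p => P (u, v))).card ≤ 2 * p := by
    intro u
    have hsub : Finset.univ.filter (fun v : ZMod p × ZMod p => P (u, v))
        ⊆ (Finset.univ.filter (fun v : ZMod p × ZMod p => u.1 * v.2 - u.2 * v.1 = 1))
          ∪ (Finset.univ.filter (fun v : ZMod p × ZMod p => u.1 * v.2 - u.2 * v.1 = -1)) := by
      intro v hv
      rcases (Finset.mem_filter.mp hv).2 with h | h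
      · exact Finset.mem_union_left _ (Finset.mem_filter.mpr ⟨Finset.mem_univ _, h⟩)
      · exact Finset.mem_union_right _ (Finset.mem_filter.mpr ⟨Finset.mem_univ _, h⟩)
    calc (Finset.univ.filter (fun v : ZMod p × ZMod p => P (u, v))).card
        ≤ _ := Finset.card_le_card hsub
      _ ≤ _ + _ := Finset.card_union_le _ _
      _ ≤ p + p := Nat.add_le_add (fiber_card_le p u 1 one_ne_zero)
          (fiber_card_le p u (-1) (neg_ne_zero.mpr one_ne_zero))
      _ = 2 * p := by ring
  have hrsum : ∑ w ∈ Bad, f w.1 * f w.2 ≤ δr := by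
    have hstep1 : ∑ w ∈ Bad, f w.1 * f w.2
        = ∑ u : ZMod p × ZMod p, ∑ v ∈ Finset.univ.filter
            (fun v : ZMod p × ZMod p => P (u, v)), f u * f v := by
      rw [hBad, Finset.sum_filter]
      rw [← Finset.univ_product_univ, Finset.sum_product]
      refine Finset.sum_congr rfl fun u _ => ?_
      rw [Finset.sum_filter]
    have hinner : ∀ u : ZMod p × ZMod p,
        ∑ v ∈ Finset.univ.filter (fun v : ZMod p × ZMod p => P (u, v)), f u * f v
          ≤ f u * (2 * p * B) := by
      intro u
      rw [← Finset.mul_sum]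
      refine mul_le_mul_of_nonneg_left ?_ (hf0 u)
      calc ∑ v ∈ Finset.univ.filter (fun v : ZMod p × ZMod p => P (u, v)), f v
          ≤ (Finset.univ.filter (fun v : ZMod p × ZMod p => P (u, v))).card • B :=
            Finset.sum_le_card_nsmul _ _ B (fun v _ => hfB v)
        _ = ((Finset.univ.filter (fun v : ZMod p × ZMod p => P (u, v))).card : ℝ) * B := by
            rw [nsmul_eq_mul]
        _ ≤ (2 * p : ℝ) * B := by
            refine mul_le_mul_of_nonneg_right ?_ (le_of_lt hBpos)
            exact_mod_cast hfibcard u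
        _ = 2 * p * B := by ring
    have hstep2 : ∑ u : ZMod p × ZMod p, f u * (2 * (p:ℝ) * B) = 2 * p * B := by
      rw [← Finset.sum_mul, hfsum, one_mul]
    have hfinal : 2 * (p:ℝ) * B ≤ δr := by
      have hexp : 2 * (p:ℝ) * B = 2 / p + δr / 2 := by
        rw [hB, hε1]
        field_simp
        ring
      have h4 : 4 < (p:ℝ) * δr := by
        rw [div_lt_iff₀ hδrpos] at hp4
        linarith
      have h2p : 2 / (p:ℝ) < δr / 2 := by
        rw [div_lt_div_iff₀ hppos (by norm_num : (0:ℝ) < 2)]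
        nlinarith
      rw [hexp]
      linarith
    calc ∑ w ∈ Bad, f w.1 * f w.2 = _ := hstep1
      _ ≤ ∑ u : ZMod p × ZMod p, f u * (2 * p * B) := Finset.sum_le_sum fun u _ => hinner u
      _ = 2 * p * B := hstep2
      _ ≤ δr := hfinal
  calc μ {ω | AddSubgroup.closure
        ({∑ i ∈ Finset.range n, ξ (false, i) ω,
          ∑ i ∈ Finset.range n, ξ (true, i) ω} : Set (ℤ × ℤ)) = ⊤}
      ≤ μ (⋃ w ∈ Bad, (Sb ⁻¹' {w.1} ∩ Tb ⁻¹' {w.2})) := measure_mono hincl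
    _ ≤ ∑ w ∈ Bad, μ (Sb ⁻¹' {w.1} ∩ Tb ⁻¹' {w.2}) := measure_biUnion_finset_le _ _
    _ = ∑ w ∈ Bad, ENNReal.ofReal (f w.1 * f w.2) := Finset.sum_congr rfl hcell
    _ = ENNReal.ofReal (∑ w ∈ Bad, f w.1 * f w.2) :=
        (ENNReal.ofReal_sum_of_nonneg (fun w _ => mul_nonneg (hf0 _) (hf0 _))).symm
    _ ≤ ENNReal.ofReal δr := ENNReal.ofReal_le_ofReal hrsum
    _ ≤ ε := hofReal
end
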